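/- Fix n ≥ 1 and let J be a maximal (for inclusion) adjacency-avoiding subset of I_n. Then for every K ∈ J, there exists m ∈ K such that the singleton interval ⟦m⟧ = {m} belongs to J. -/

import Mathlib

/-- `K` is an interval of `{1, …, n}`: a set `⟦i,j⟧ = {i, i+1, …, j}` with `1 ≤ i ≤ j ≤ n`. -/
def IsInterval (n : ℕ) (K : Set ℕ) : Prop :=
  ∃ i j, 1 ≤ i ∧ i ≤ j ∧ j ≤ n ∧ K = Set.Icc i j

/-- The lower bound `b(K)` of an interval `K`. -/
noncomputable def intB (K : Set ℕ) : ℕ := sInf K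

/-- The upper bound `e(K)` of an interval `K`. -/
noncomputable def intE (K : Set ℕ) : ℕ := sSup K

/-- `J(B, E)`: the set of intervals `K` of `{1, …, n}` with `b(K) ∈ B` and `e(K) ∈ E`. -/
def intervalsOf (n : ℕ) (B E : Set ℕ) : Set (Set ℕ) :=
  {K | IsInterval n K ∧ intB K ∈ B ∧ intE K ∈ E}

/-- Two intervals `K`, `L` are adjacent if `b(K) = e(L) + 1` or `b(L) = e(K) + 1`. -/
def Adjacent (K L : Set ℕ) : Prop :=
  intB K = intE L + 1 ∨ intB L = intE K + 1

/-- An interval set is adjacency-avoiding if it contains no pair of adjacent intervals. -/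
def AdjAvoiding (J : Set (Set ℕ)) : Prop :=
  ∀ K ∈ J, ∀ L ∈ J, ¬ Adjacent K L

/-- The shift `A[1] = {a + 1 : a ∈ A}` of a set of integers. -/
def shiftSet (A : Set ℕ) : Set ℕ := (· + 1) '' A

/-! If no point `m` of `K = ⟦i,j⟧ ∈ J` had `{m} ∈ J`, maximality would make every `{m}` adjacent
to some `L ∈ J`: either `L` ends at `m - 1` or starts at `m + 1`. At `m = j` the second option
would make `L` adjacent to `K`; and if `m + 1` is preceded by an interval ending at `m`, an interval
starting at `m + 1` would be adjacent to it. So descending from `j`, every `m ∈ K` is preceded by an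
interval of `J` ending at `m - 1`, and for `m = i` that interval is adjacent to `K`. -/

lemma intB_Icc {i j : ℕ} (h : i ≤ j) : intB (Set.Icc i j) = i := csInf_Icc h

lemma intE_Icc {i j : ℕ} (h : i ≤ j) : intE (Set.Icc i j) = j := csSup_Icc h

lemma isInterval_singleton {n m : ℕ} (h1 : 1 ≤ m) (hn : m ≤ n) : IsInterval n {m} :=
  ⟨m, m, h1, le_rfl, hn, (Set.Icc_self m).symm⟩

lemma Adjacent.symm {K L : Set ℕ} (h : Adjacent K L) : Adjacent L K := Or.symm h

lemma adjacent_singleton_left_iff {m : ℕ} {L : Set ℕ} :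
    Adjacent {m} L ↔ m = intE L + 1 ∨ intB L = m + 1 := by
  simp only [Adjacent, intB, intE, csInf_singleton, csSup_singleton]

lemma not_adjacent_singleton_self (m : ℕ) : ¬ Adjacent {m} {m} := by
  rw [adjacent_singleton_left_iff, intB, intE, csInf_singleton, csSup_singleton]
  omega

namespace AdjAvoiding

variable {J : Set (Set ℕ)}

lemma exists_adjacent_of_not_union (hJ : AdjAvoiding J) {K : Set ℕ} (hK : ¬ Adjacent K K)
    (h : ¬ AdjAvoiding (J ∪ {K})) : ∃ L ∈ J, Adjacent K L := by
  simp only [AdjAvoiding, not_forall, not_not] at h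
  obtain ⟨L₁, hL₁ | rfl, L₂, hL₂ | rfl, hadj⟩ := h
  · exact absurd hadj (hJ L₁ hL₁ L₂ hL₂)
  · exact ⟨L₁, hL₁, hadj.symm⟩
  · exact ⟨L₂, hL₂, hadj⟩
  · exact absurd hadj hK

lemma exists_intE_succ_eq (hJ : AdjAvoiding J) {i j : ℕ} (hij : i ≤ j)
    (hadj : ∀ m, i ≤ m → m ≤ j → ∃ L ∈ J, Adjacent {m} L)
    (hj : ∀ L ∈ J, intB L ≠ j + 1) : ∃ L ∈ J, intE L + 1 = i := by
  induction hij using Nat.decreasingInduction with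
  | self =>
    obtain ⟨L, hL, hjL⟩ := hadj j le_rfl le_rfl
    rcases adjacent_singleton_left_iff.mp hjL with h | h
    · exact ⟨L, hL, h.symm⟩
    · exact absurd h (hj L hL)
  | of_succ m hmj ih =>
    obtain ⟨L', hL', hL'e⟩ := ih fun k hk hkj => hadj k (by omega) hkj
    obtain ⟨L, hL, hmL⟩ := hadj m le_rfl hmj.le
    rcases adjacent_singleton_left_iff.mp hmL with h | h
    · exact ⟨L, hL, h.symm⟩
    · exact absurd (Or.inl (by omega)) (hJ L hL L' hL')

end AdjAvoiding

theorem maximal_adjAvoiding_singleton_general (n : ℕ) (J : Set (Set ℕ))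
    (hJint : ∀ K ∈ J, IsInterval n K)
    (hJ : AdjAvoiding J)
    (hmax : ∀ K : Set ℕ, IsInterval n K → K ∉ J → ¬ AdjAvoiding (J ∪ {K})) :
    ∀ K ∈ J, ∃ m ∈ K, ({m} : Set ℕ) ∈ J := by
  intro K hK
  obtain ⟨i, j, hi, hij, hjn, rfl⟩ := hJint K hK
  by_contra! hno
  have hadj : ∀ m, i ≤ m → m ≤ j → ∃ L ∈ J, Adjacent {m} L := fun m him hmj =>
    hJ.exists_adjacent_of_not_union (not_adjacent_singleton_self m)
      (hmax _ (isInterval_singleton (hi.trans him) (hmj.trans hjn)) (hno m ⟨him, hmj⟩))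
  have hj : ∀ L ∈ J, intB L ≠ j + 1 := fun L hL h =>
    hJ _ hK L hL (Or.inr (by rw [intE_Icc hij, h]))
  obtain ⟨L, hL, hLi⟩ := hJ.exists_intE_succ_eq hij hadj hj
  exact hJ _ hK L hL (Or.inl (by rw [intB_Icc hij, hLi]))

/-- In a maximal (for inclusion) adjacency-avoiding subset `J` of `I_n`, every interval
`K ∈ J` contains some `m` whose singleton interval `⟦m⟧ = {m}` lies in `J`. -/
theorem maximal_adjAvoiding_singleton (n : ℕ) (hn : 1 ≤ n) (J : Set (Set ℕ))
    (hJint : ∀ K ∈ J, IsInterval n K)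
    (hJ : AdjAvoiding J)
    (hmax : ∀ K : Set ℕ, IsInterval n K → K ∉ J → ¬ AdjAvoiding (J ∪ {K})) :
    ∀ K ∈ J, ∃ m ∈ K, ({m} : Set ℕ) ∈ J :=
  maximal_adjAvoiding_singleton_general n J hJint hJ hmax
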